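/- arXiv:2111.08959 — 5 statements merged into one kernel-verified Lean document; each statement's English description precedes it below -/
import Mathlib

section
/- Let T be an arborescence rooted at s in a directed graph, and let S be a set of vertices containing s such that exactly one edge of T goes from S to its complement. Then for any two vertices x and y both outside S, every vertex on the unique undirected path in T between x and y is also outside S. -/
/-- `z` is an ancestor of `x` in the arborescence given by the parent map `parent`
(obtained by iterating the parent map from `x`). -/
def IsAncestor {V : Type*} (parent : V → V) (z x : V) : Prop :=
  ∃ n : ℕ, parent^[n] x = z

/-- `l` is the lowest common ancestor of `x` and `y`: it is a common ancestor and
every common ancestor of `x` and `y` is an ancestor of `l`. -/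
def IsLCA {V : Type*} (parent : V → V) (l x y : V) : Prop :=
  IsAncestor parent l x ∧ IsAncestor parent l y ∧
    ∀ w : V, IsAncestor parent w x → IsAncestor parent w y → IsAncestor parent w l

/-- `z` lies on the unique undirected path between `x` and `y` in the tree: `z` is an
ancestor of `x` or of `y`, and the lowest common ancestor of `x` and `y` is an
ancestor of `z`. -/
def OnTreePath {V : Type*} (parent : V → V) (x y z : V) : Prop :=
  ∃ l : V, IsLCA parent l x y ∧
    (IsAncestor parent z x ∨ IsAncestor parent z y) ∧ IsAncestor parent l z

/-- If `T` is an arborescence rooted at `s` (every vertex reaches `s` by iterating the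
parent map, witnessed by a depth function) and `S ∋ s` is a vertex set such that exactly
one edge of `T` goes from `S` to its complement, then for `x, y ∉ S`, every vertex on the
unique undirected tree path between `x` and `y` is also outside `S`. -/
theorem stmt0 {V : Type*} (parent : V → V) (s : V) (depth : V → ℕ)
    (hroot : parent s = s) (hdepth0 : depth s = 0)
    (hdepth : ∀ v : V, v ≠ s → depth v = depth (parent v) + 1)
    (S : Set V) (hsS : s ∈ S)
    (hcross : ∃! v : V, v ≠ s ∧ parent v ∈ S ∧ v ∉ S)
    (x y : V) (hx : x ∉ S) (hy : y ∉ S)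
    (z : V) (hz : OnTreePath parent x y z) :
    z ∉ S := by
  classical
  obtain ⟨l, hl, hzxy, hlz⟩ := hz
  obtain ⟨v0, ⟨hv0s, hv0p, hv0S⟩, huniq⟩ := hcross
  -- every vertex reaches s
  have hreach : ∀ n w, depth w = n → parent^[n] w = s := by
    intro n
    induction n with
    | zero =>
      intro w hw
      by_contra h
      have hws : w ≠ s := by rintro rfl; simp at h
      rw [hdepth w hws] at hw; omega
    | succ n ih =>
      intro w hw
      have hws : w ≠ s := by rintro rfl; rw [hdepth0] at hw; omega
      have : depth (parent w) = n := by have := hdepth w hws; omega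
      rw [Function.iterate_succ_apply]
      exact ih (parent w) this
  -- only cycle point is s
  have hcyc : ∀ n u, depth u ≤ n → ∀ d, 0 < d → parent^[d] u = u → u = s := by
    intro n
    induction n with
    | zero =>
      intro u hu d hd hdu
      by_contra hus
      rw [hdepth u hus] at hu; omega
    | succ n ih =>
      intro u hu d hd hdu
      by_cases hus : u = s
      · exact hus
      · have h1 : depth (parent u) ≤ n := by have := hdepth u hus; omega
        have h2 : parent^[d] (parent u) = parent u := by
          rw [← Function.iterate_succ_apply, Function.iterate_succ_apply', hdu]
        have hps : parent u = s := ih (parent u) h1 d hd h2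
        obtain ⟨e, rfl⟩ := Nat.exists_eq_succ_of_ne_zero (Nat.pos_iff_ne_zero.mp hd)
        rw [Function.iterate_succ_apply, hps, Function.iterate_fixed hroot] at hdu
        exact (hus hdu.symm).elim
  -- first crossing from any w ∉ S is v0
  have hstep : ∀ w, w ∉ S → ∃ i, 0 < i ∧ parent^[i-1] w = v0 ∧
      ∀ m, parent^[m] w ∈ S → i ≤ m := by
    intro w hw
    have hP : ∃ k, parent^[k] w ∈ S := ⟨depth w, by rw [hreach (depth w) w rfl]; exact hsS⟩
    refine ⟨Nat.find hP, ?_, ?_, fun m hm => Nat.find_le hm⟩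
    · exact Nat.pos_of_ne_zero (fun h => hw (by simpa [h] using Nat.find_spec hP))
    · have hipos : 0 < Nat.find hP :=
        Nat.pos_of_ne_zero (fun h => hw (by simpa [h] using Nat.find_spec hP))
      set i := Nat.find hP with hidef
      have hu1 : parent^[i-1] w ∉ S := Nat.find_min hP (by omega)
      have hu2 : parent (parent^[i-1] w) ∈ S := by
        have h : parent (parent^[i-1] w) = parent^[i] w := by
          conv_rhs => rw [show i = (i-1)+1 by omega]
          rw [Function.iterate_succ_apply']
        rw [h]; exact Nat.find_spec hP
      have hu3 : parent^[i-1] w ≠ s := by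
        intro h; rw [h] at hu1; exact hu1 hsS
      exact huniq _ ⟨hu3, hu2, hu1⟩
  -- v0 is an ancestor of l
  have hanc : ∀ w, w ∉ S → IsAncestor parent v0 w := by
    intro w hw
    obtain ⟨i, _, hi, _⟩ := hstep w hw
    exact ⟨i - 1, hi⟩
  have hv0l : IsAncestor parent v0 l := hl.2.2 v0 (hanc x hx) (hanc y hy)
  obtain ⟨a, ha⟩ := hlz
  obtain ⟨b, hb⟩ := hv0l
  have hv0z : ∃ j, parent^[j] z = v0 := ⟨b + a, by rw [Function.iterate_add_apply, ha, hb]⟩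
  obtain ⟨j, hj⟩ := hv0z
  -- main argument: z between w and v0 implies z ∉ S
  have key : ∀ w, w ∉ S → ∀ m, parent^[m] w = z → z ∉ S := by
    intro w hw m hm hzS
    obtain ⟨i, hipos, hiv0, hmin⟩ := hstep w hw
    have him : i ≤ m := hmin m (by rw [hm]; exact hzS)
    have hd : parent^[j + m - (i-1)] v0 = v0 := by
      rw [← hiv0, ← Function.iterate_add_apply]
      have : j + m - (i - 1) + (i - 1) = j + m := by omega
      rw [this, Function.iterate_add_apply, hm, hj]
      exact hiv0.symm
    exact hv0s (hcyc (depth v0) v0 le_rfl _ (by omega) hd)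
  rcases hzxy with ⟨m, hm⟩ | ⟨m, hm⟩
  · exact key x hx m hm
  · exact key y hy m hm
end

section
/- Let T be an arborescence rooted at s, and S a vertex set containing s with exactly one T-edge from S to its complement. If x, y ∉ S and z is the lowest common ancestor of x and y in T, then z ∉ S. -/
/-- If `T` is an arborescence rooted at `s`, `S ∋ s` has exactly one `T`-edge from `S`
to its complement, `x, y ∉ S`, and `z` is the lowest common ancestor of `x` and `y`
in `T`, then `z ∉ S`. -/
theorem stmt1 {V : Type*} (parent : V → V) (s : V) (depth : V → ℕ)
    (hroot : parent s = s) (hdepth0 : depth s = 0)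
    (hdepth : ∀ v : V, v ≠ s → depth v = depth (parent v) + 1)
    (S : Set V) (hsS : s ∈ S)
    (hcross : ∃! v : V, v ≠ s ∧ parent v ∈ S ∧ v ∉ S)
    (x y : V) (hx : x ∉ S) (hy : y ∉ S)
    (z : V) (hz : IsLCA parent z x y) :
    z ∉ S := by
  classical
  obtain ⟨⟨a, ha⟩, ⟨b, hb⟩, hmin⟩ := hz
  have hple : ∀ v, depth (parent v) ≤ depth v := by
    intro v
    by_cases h : v = s
    · subst h; rw [hroot]
    · rw [hdepth v h]; omega
  have hiterle : ∀ n v, depth (parent^[n] v) ≤ depth v := by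
    intro n
    induction n with
    | zero => intro v; simp
    | succ n ih =>
      intro v
      rw [Function.iterate_succ_apply]
      exact (ih _).trans (hple v)
  have hreach : ∀ n v, depth v = n → parent^[n] v = s := by
    intro n
    induction n using Nat.strong_induction_on with
    | _ n ih =>
      intro v hd
      by_cases h : v = s
      · subst h; rw [Function.iterate_fixed hroot]
      · have h1 := hdepth v h
        have h2 : depth (parent v) < n := by omega
        have h3 : n = depth (parent v) + 1 := by omega
        rw [h3, Function.iterate_succ_apply]
        exact ih _ h2 _ rfl
  obtain ⟨w, ⟨hwns, hwpS, hwS⟩, hwu⟩ := hcross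
  -- the first crossing from any vertex outside S is w
  have hkey : ∀ v : V, v ∉ S → ∃ k : ℕ, parent^[k] v = w ∧ ∀ j ≤ k, parent^[j] v ∉ S := by
    intro v hv
    have hex : ∃ n, parent^[n] v ∈ S := ⟨depth v, by rw [hreach _ _ rfl]; exact hsS⟩
    set k := Nat.find hex with hk
    have hkS : parent^[k] v ∈ S := Nat.find_spec hex
    have hkpos : 0 < k := by
      rcases Nat.eq_zero_or_pos k with h | h
      · exfalso; apply hv; simpa [h] using hkS
      · exact h
    have hlt : ∀ j < k, parent^[j] v ∉ S := fun j hj => Nat.find_min hex hj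
    set u := parent^[k - 1] v with hu
    have huS : u ∉ S := hlt _ (by omega)
    have hupS : parent u ∈ S := by
      have : parent u = parent^[k] v := by
        rw [hu, ← Function.iterate_succ_apply' parent (k-1) v]
        congr 1; omega
      rw [this]; exact hkS
    have hus : u ≠ s := fun h => huS (h ▸ hsS)
    have huw : u = w := hwu u ⟨hus, hupS, huS⟩
    exact ⟨k - 1, huw ▸ rfl, fun j hj => hlt j (by omega)⟩
  obtain ⟨kx, hkxw, hkxS⟩ := hkey x hx
  obtain ⟨ky, hkyw, hkyS⟩ := hkey y hy
  -- w is a common ancestor, hence an ancestor of z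
  obtain ⟨m, hm⟩ := hmin w ⟨kx, hkxw⟩ ⟨ky, hkyw⟩
  by_cases hak : a ≤ kx
  · -- z is at or below the crossing on x's chain
    rw [← ha]; exact hkxS a hak
  · -- z is strictly above w on x's chain, but w is an ancestor of z: so z = w
    have hzw : parent^[a - kx] w = z := by
      rw [← hkxw, ← Function.iterate_add_apply]
      rw [← ha]; congr 1; omega
    have hdzw : depth z = depth w := by
      have h1 : depth z ≤ depth w := hzw ▸ hiterle _ _
      have h2 : depth w ≤ depth z := hm ▸ hiterle _ _
      omega
    have hzeq : z = w := by
      by_contra hne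
      have hzs : z ≠ s := by
        intro h
        subst h
        rw [Function.iterate_fixed hroot] at hm
        exact hwns hm.symm
      have hmpos : 0 < m := by
        rcases Nat.eq_zero_or_pos m with h | h
        · exfalso; apply hne; rw [← hm, h, Function.iterate_zero_apply]
        · exact h
      have : depth w ≤ depth (parent z) := by
        rw [← hm]
        have : parent^[m] z = parent^[m-1] (parent z) := by
          rw [← Function.iterate_succ_apply]; congr 1; omega
        rw [this]
        exact hiterle _ _
      have := hdepth z hzs
      omega
    rw [hzeq]; exact hwS
end

section
/- Suppose the sets C_0, C_1, ..., C_{ℓ} partition the vertex set V, where C_0 = {s} and C_i are the centroids removed at layer i of a centroid decomposition of an s-arborescence T, and P_i is the collection of subtrees present at layer i. Let S ∋ s be a vertex set with exactly one T-edge from S to V\S. If C_j ⊆ S for all j < i, then V\S is entirely contained in a single subtree of P_i, and at most one centroid in C_i lies in V\S. -/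
/-- Centroid decomposition of an `s`-arborescence `T`: `C j` is the set of centroids removed
at layer `j` (with `C 0 = {s}`) and `P i` is the collection of subtrees present at layer `i`
(the connected components of `T` after removing `⋃_{j<i} C j`: they are pairwise disjoint,
cover all non-removed vertices, each contains exactly one centroid of `C i`, and any tree
path between vertices of two distinct subtrees of `P i` passes through a removed vertex).
If `S ∋ s` has exactly one `T`-edge from `S` to `V \ S` (nonempty), and `C j ⊆ S` for all
`j < i`, then `V \ S` is contained in exactly one subtree of `P i`, and at most one centroid
of `C i` lies in `V \ S`. -/
theorem stmt4 {V : Type*} (parent : V → V) (s : V) (depth : V → ℕ)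
    (hroot : parent s = s) (hdepth0 : depth s = 0)
    (hdepth : ∀ v : V, v ≠ s → depth v = depth (parent v) + 1)
    (S : Set V) (hsS : s ∈ S) (hSne : ∃ v : V, v ∉ S)
    (hcross : ∃! v : V, v ≠ s ∧ parent v ∈ S ∧ v ∉ S)
    (C : ℕ → Set V) (P : ℕ → Set (Set V)) (i : ℕ)
    (hC0 : C 0 = {s})
    (hCS : ∀ j : ℕ, j < i → C j ⊆ S)
    (hcover : ∀ v : V, (∀ j : ℕ, j < i → v ∉ C j) → ∃ U ∈ P i, v ∈ U)
    (hdisj : ∀ U₁ ∈ P i, ∀ U₂ ∈ P i, U₁ ≠ U₂ → Disjoint U₁ U₂)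
    (hsep : ∀ U₁ ∈ P i, ∀ U₂ ∈ P i, U₁ ≠ U₂ → ∀ x ∈ U₁, ∀ y ∈ U₂,
      ∃ z : V, OnTreePath parent x y z ∧ ∃ j : ℕ, j < i ∧ z ∈ C j)
    (hcent : ∀ c ∈ C i, ∃ U ∈ P i, c ∈ U)
    (hcent1 : ∀ U ∈ P i, ∀ c₁ ∈ C i, ∀ c₂ ∈ C i, c₁ ∈ U → c₂ ∈ U → c₁ = c₂) :
    (∃! U : Set V, U ∈ P i ∧ ∀ v : V, v ∉ S → v ∈ U) ∧
      (∀ c₁ ∈ C i, ∀ c₂ ∈ C i, c₁ ∉ S → c₂ ∉ S → c₁ = c₂) := by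

  obtain ⟨v₀, ⟨hv0s, hv0pS, hv0nS⟩, huniq⟩ := hcross
  -- every vertex reaches the root
  have hreach : ∀ v : V, parent^[depth v] v = s := by
    have H : ∀ (n : ℕ) (v : V), depth v = n → parent^[n] v = s := by
      intro n
      induction n with
      | zero =>
        intro v h
        by_cases hv : v = s
        · simp [hv]
        · have := hdepth v hv; omega
      | succ n ih =>
        intro v h
        have hv : v ≠ s := by
          intro e; rw [e, hdepth0] at h; omega
        have hp : depth (parent v) = n := by
          have := hdepth v hv; omega
        rw [Function.iterate_succ_apply]
        exact ih (parent v) hp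
    intro v; exact H (depth v) v rfl
  have hstep : ∀ (k : ℕ) (v : V), parent^[k] v = s ∨ depth (parent^[k] v) + k = depth v := by
    intro k
    induction k with
    | zero => intro v; right; simp
    | succ k ih =>
      intro v
      rcases ih v with h | h
      · left; rw [Function.iterate_succ_apply', h, hroot]
      · by_cases hu : parent^[k] v = s
        · left; rw [Function.iterate_succ_apply', hu, hroot]
        · right
          rw [Function.iterate_succ_apply']
          have := hdepth _ hu
          omega
  have hnocyc : ∀ (v : V) (k : ℕ), v ≠ s → parent^[k + 1] v = v → False := by
    intro v k hv h
    rcases hstep (k + 1) v with h' | h'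
    · exact hv (h ▸ h')
    · rw [h] at h'; omega
  -- first crossing along the ancestor chain is v₀
  have hfc : ∀ (n : ℕ) (x : V), x ∉ S → parent^[n] x ∈ S → ∃ m, m < n ∧ parent^[m] x = v₀ := by
    intro n
    induction n with
    | zero =>
      intro x hx h
      simp only [Function.iterate_zero, id_eq] at h
      exact absurd h hx
    | succ n ih =>
      intro x hx h
      by_cases hn : parent^[n] x ∈ S
      · obtain ⟨m, hm, he⟩ := ih x hx hn
        exact ⟨m, by omega, he⟩
      · refine ⟨n, by omega, huniq _ ⟨?_, ?_, hn⟩⟩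
        · intro e; rw [e] at hn; exact hn hsS
        · rw [← Function.iterate_succ_apply' parent n x]; exact h
  have hv0anc : ∀ x : V, x ∉ S → ∃ m, parent^[m] x = v₀ := by
    intro x hx
    obtain ⟨m, _, hm⟩ := hfc (depth x) x hx (by rw [hreach]; exact hsS)
    exact ⟨m, hm⟩
  -- key lemma: a vertex on the tree path between two vertices outside S is outside S
  have inner : ∀ x y z l : V, x ∉ S → y ∉ S → IsLCA parent l x y →
      IsAncestor parent z x → IsAncestor parent l z → z ∉ S := by
    intro x y z l hx hy hl hzx hlz hzS
    obtain ⟨m, hm⟩ := hzx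
    obtain ⟨k, hk⟩ := hlz
    obtain ⟨m', hm', he⟩ := hfc m x hx (by rw [hm]; exact hzS)
    have hz : parent^[m - m'] v₀ = z := by
      rw [← he, ← Function.iterate_add_apply, Nat.sub_add_cancel (le_of_lt hm'), hm]
    have hlv : parent^[k + (m - m')] v₀ = l := by
      rw [Function.iterate_add_apply, hz, hk]
    have hal : ∃ a, parent^[a] l = v₀ := by
      by_cases hlS : l ∈ S
      · obtain ⟨r, hr⟩ := hl.2.1
        obtain ⟨r', _, hr'⟩ := hfc r y hy (by rw [hr]; exact hlS)
        exact hl.2.2 v₀ ⟨m', he⟩ ⟨r', hr'⟩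
      · exact hv0anc l hlS
    obtain ⟨a, ha⟩ := hal
    have hcyc : parent^[a + (k + (m - m'))] v₀ = v₀ := by
      rw [Function.iterate_add_apply, hlv, ha]
    have hd : 1 ≤ m - m' := by omega
    apply hnocyc v₀ (a + (k + (m - m')) - 1) hv0s
    have heq : a + (k + (m - m')) - 1 + 1 = a + (k + (m - m')) := by omega
    rw [heq]; exact hcyc
  have hkey : ∀ x y z : V, x ∉ S → y ∉ S → OnTreePath parent x y z → z ∉ S := by
    intro x y z hx hy hz
    obtain ⟨l, hl, hzxy, hlz⟩ := hz
    rcases hzxy with h | h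
    · exact inner x y z l hx hy hl h hlz
    · exact inner y x z l hy hx ⟨hl.2.1, hl.1, fun w h1 h2 => hl.2.2 w h2 h1⟩ h hlz
  -- main argument
  obtain ⟨w, hw⟩ := hSne
  obtain ⟨U, hU, hwU⟩ := hcover w (fun j hj hin => hw (hCS j hj hin))
  have hall : ∀ v : V, v ∉ S → v ∈ U := by
    intro v hv
    obtain ⟨U', hU', hvU'⟩ := hcover v (fun j hj hin => hv (hCS j hj hin))
    by_cases hUU : U' = U
    · exact hUU ▸ hvU'
    · exfalso
      obtain ⟨z, hz, j, hj, hzC⟩ := hsep U' hU' U hU hUU v hvU' w hwU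
      exact hkey v w z hv hw hz (hCS j hj hzC)
  constructor
  · refine ⟨U, ⟨hU, hall⟩, ?_⟩
    rintro U' ⟨hU', hall'⟩
    by_contra hne
    exact Disjoint.ne_of_mem (hdisj U' hU' U hU hne) (hall' w hw) (hall w hw) rfl
  · intro c₁ hc₁ c₂ hc₂ h1 h2
    exact hcent1 U hU c₁ hc₁ c₂ hc₂ (hall c₁ h1) (hall c₂ h2)
end

section
/- With the randomized rounding of edge weights to multiples of τ = c·ε²λ/(k log n) (for a sufficiently small constant c), with high probability every vertex set T ⊆ V simultaneously satisfies |w₂(T) − w₁(T)| ≤ ε·w₁(T) + ελ|T|/(2k), where w₁(T) is the original weight of edges entering T and w₂(T) the rounded weight. -/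
/-!
For a fixed vertex set `T`, `w₂(T) - w₁(T)` is a sum of independent centred variables bounded by
`τ`, and the rounding of a weight `w` to a multiple of `τ` has variance
`(w - ⌊w⌋_τ)(⌈w⌉_τ - w) ≤ τ w`. A Bernstein-type Chernoff bound at `t = ε / (2τ)` therefore makes
the deviation exceed `ε w₁(T) + ελ|T|/(2k)` with probability at most
`2 exp(-ε²λ|T| / (4kτ)) = 2 n^(-25|T|)` for `c = 1/100`. The empty set never fails, and a union
bound over the nonempty sets gives `2((1 + n⁻²⁵)ⁿ - 1) ≤ 1/n`.
-/

open MeasureTheory ProbabilityTheory Finset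

lemma Real.exp_le_one_add_add_sq {x : ℝ} (hx : x ≤ 1) : Real.exp x ≤ 1 + x + x ^ 2 := by
  rcases le_or_gt |x| 1 with hx1 | hx1
  · have h := abs_le.mp (Real.exp_bound hx1 (n := 2) (by norm_num))
    norm_num [Finset.sum_range_succ, sq_abs] at h
    nlinarith [h.2]
  · have hneg : x < -1 := by
      rcases abs_cases x with ⟨h, _⟩ | ⟨h, _⟩ <;> linarith
    have : Real.exp x < 1 := Real.exp_lt_one_iff.mpr (by linarith)
    nlinarith

lemma two_mul_inv_pow_add_one_pow_sub_one_le {n : ℕ} (hn : 2 ≤ n) :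
    2 * ((((n : ℝ) ^ 25)⁻¹ + 1) ^ n - 1) ≤ 1 / n := by
  have hn' : (2 : ℝ) ≤ n := by exact_mod_cast hn
  set y : ℝ := n * ((n : ℝ) ^ 25)⁻¹
  have hy : y = ((n : ℝ) ^ 24)⁻¹ := by
    simp only [y]; field_simp
  have hy0 : 0 ≤ y := by positivity
  have hy1 : y ≤ 1 := by
    rw [hy]; exact inv_le_one_of_one_le₀ (one_le_pow₀ (by linarith))
  have hpow : (((n : ℝ) ^ 25)⁻¹ + 1) ^ n ≤ 1 + 2 * y :=
    calc (((n : ℝ) ^ 25)⁻¹ + 1) ^ n ≤ Real.exp (((n : ℝ) ^ 25)⁻¹) ^ n := by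
          gcongr; exact Real.add_one_le_exp _
      _ = Real.exp y := by rw [← Real.exp_nat_mul]
      _ ≤ 1 + 2 * y := by nlinarith [Real.exp_le_one_add_add_sq hy1, hy0]
  have h4y : 4 * y ≤ 1 / n := by
    have : (2 : ℝ) ^ 23 ≤ (n : ℝ) ^ 23 := pow_le_pow_left₀ (by norm_num) hn' 23
    rw [hy, ← one_div, mul_one_div, div_le_div_iff₀ (by positivity) (by positivity), pow_succ]
    nlinarith
  linarith

lemma chernoff_exponent_le {ε lam k L τ W c : ℝ} (hk : 0 < k) (hL : 0 < L) (hW : 0 ≤ W)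
    (hτ : τ = 1 / 100 * ε ^ 2 * lam / (k * L)) (hτ0 : 0 < τ) :
    -(ε / (2 * τ)) * (ε * W + ε * lam * c / (2 * k)) + (ε / (2 * τ)) ^ 2 * (τ * W) ≤
      -(25 * c * L) := by
  have key : ε ^ 2 * lam = 100 * τ * k * L := by rw [hτ]; field_simp
  have : -(ε / (2 * τ)) * (ε * W + ε * lam * c / (2 * k)) + (ε / (2 * τ)) ^ 2 * (τ * W) =
      -(ε ^ 2 * W / (4 * τ)) - 25 * c * L := by
    field_simp
    linear_combination (-4 * c) * key
  rw [this]
  have : 0 ≤ ε ^ 2 * W / (4 * τ) := by positivity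
  linarith

section Concentration

variable {Ω : Type*} [MeasurableSpace Ω] {μ : Measure Ω}

lemma measureReal_iUnion_le_mul_add_one_pow_sub_one {V : Type*} [Fintype V]
    {A : Finset V → Set Ω} {C x : ℝ} (hA₀ : A ∅ = ∅)
    (hA : ∀ T : Finset V, T.Nonempty → μ.real (A T) ≤ C * x ^ T.card) :
    μ.real (⋃ T, A T) ≤ C * ((x + 1) ^ Fintype.card V - 1) :=
  calc μ.real (⋃ T, A T) ≤ ∑ T, μ.real (A T) := measureReal_iUnion_fintype_le _
    _ ≤ ∑ T : Finset V, C * (x ^ T.card - 0 ^ T.card) := sum_le_sum fun T _ => by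
        rcases T.eq_empty_or_nonempty with rfl | hT
        · simp [hA₀]
        · rw [zero_pow hT.card_pos.ne', sub_zero]
          exact hA T hT
    _ = C * ((x + 1) ^ Fintype.card V - 1) := by
        have hbinom (a : ℝ) : ∑ T : Finset V, a ^ T.card = (a + 1) ^ Fintype.card V := by
          simpa using Fintype.sum_pow_mul_eq_add_pow V a (1 : ℝ)
        rw [← mul_sum, sum_sub_distrib, hbinom, hbinom, zero_add, one_pow]

lemma integrable_exp_mul_of_ae_abs_le [IsFiniteMeasure μ] {Y : Ω → ℝ}
    (hY : AEStronglyMeasurable Y μ) {C : ℝ} (hC : ∀ᵐ ω ∂μ, |Y ω| ≤ C) (t : ℝ) : Integrable (fun ω => Real.exp (t * Y ω)) μ := by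
  refine .of_bound (hY.aemeasurable.const_mul t).exp.aestronglyMeasurable (Real.exp (|t| * C)) ?_
  filter_upwards [hC] with ω hω
  rw [Real.norm_eq_abs, Real.abs_exp, Real.exp_le_exp]
  calc t * Y ω ≤ |t| * |Y ω| := by rw [← abs_mul]; exact le_abs_self _
    _ ≤ |t| * C := by gcongr

def IsRandomRounding (μ : Measure Ω) (τ w : ℝ) (X : Ω → ℝ) : Prop :=
  (∀ᵐ ω ∂μ, X ω = ⌊w / τ⌋ * τ ∨ X ω = (⌊w / τ⌋ + 1) * τ) ∧ ∫ ω, X ω ∂μ = w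

lemma IsRandomRounding.ae_abs_sub_le {τ w : ℝ} {X : Ω → ℝ} (hX : IsRandomRounding μ τ w X)
    (hτ : 0 < τ) : ∀ᵐ ω ∂μ, |X ω - w| ≤ τ := by
  have h0 := Int.sub_floor_div_mul_nonneg w hτ
  have h1 := Int.sub_floor_div_mul_lt w hτ
  filter_upwards [hX.1] with ω hω
  rw [abs_le]
  rcases hω with h | h <;> rw [h] <;> constructor <;> linarith

variable [IsProbabilityMeasure μ]

lemma mgf_le_exp_sq_mul_integral_sq {Y : Ω → ℝ} (hY : AEStronglyMeasurable Y μ) {C t : ℝ}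
    (hC : ∀ᵐ ω ∂μ, |Y ω| ≤ C) (htC : |t| * C ≤ 1) (hmean : ∫ ω, Y ω ∂μ = 0) :
    mgf Y μ t ≤ Real.exp (t ^ 2 * ∫ ω, Y ω ^ 2 ∂μ) := by
  have hY1 : Integrable Y μ := .of_bound hY C (by simpa only [Real.norm_eq_abs] using hC)
  have hY2 : Integrable (fun ω => Y ω ^ 2) μ :=
    .of_bound (hY.pow 2) (C ^ 2) <| by
      filter_upwards [hC] with ω hω
      rw [Real.norm_eq_abs, abs_pow]
      exact pow_le_pow_left₀ (abs_nonneg _) hω 2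
  have hpoint : ∀ᵐ ω ∂μ, Real.exp (t * Y ω) ≤ 1 + t * Y ω + t ^ 2 * Y ω ^ 2 := by
    filter_upwards [hC] with ω hω
    have : t * Y ω ≤ 1 :=
      calc t * Y ω ≤ |t| * |Y ω| := by rw [← abs_mul]; exact le_abs_self _
        _ ≤ |t| * C := by gcongr
        _ ≤ 1 := htC
    simpa only [mul_pow] using Real.exp_le_one_add_add_sq this
  calc mgf Y μ t ≤ ∫ ω, 1 + t * Y ω + t ^ 2 * Y ω ^ 2 ∂μ :=
        integral_mono_ae (integrable_exp_mul_of_ae_abs_le hY hC t) (by fun_prop) hpoint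
    _ = 1 + t ^ 2 * ∫ ω, Y ω ^ 2 ∂μ := by
        rw [integral_add (by fun_prop) (by fun_prop), integral_add (by fun_prop) (by fun_prop),
          integral_const_mul, integral_const_mul, hmean]
        simp
    _ ≤ Real.exp (t ^ 2 * ∫ ω, Y ω ^ 2 ∂μ) := by
        linarith [Real.add_one_le_exp (t ^ 2 * ∫ ω, Y ω ^ 2 ∂μ)]

lemma integral_sub_sq_of_ae_eq_or_eq {X : Ω → ℝ} (hX : AEStronglyMeasurable X μ) {a b w : ℝ}
    (hab : ∀ᵐ ω ∂μ, X ω = a ∨ X ω = b) (hmean : ∫ ω, X ω ∂μ = w) :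
    ∫ ω, (X ω - w) ^ 2 ∂μ = (w - a) * (b - w) := by
  have hX1 : Integrable X μ := .of_bound hX (max |a| |b|) <| by
    filter_upwards [hab] with ω hω
    rcases hω with h | h <;> simp [h]
  -- on the two atoms, `(x - w)²` agrees with an affine function of `x`
  have haffine : ∀ᵐ ω ∂μ, (X ω - w) ^ 2 = (a + b - 2 * w) * (X ω - w) + (w - a) * (b - w) := by
    filter_upwards [hab] with ω hω
    rcases hω with h | h <;> rw [h] <;> ring
  rw [integral_congr_ae haffine, integral_add (by fun_prop) (by fun_prop), integral_const_mul,
    integral_sub hX1 (by fun_prop), hmean]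
  simp

lemma IsRandomRounding.mgf_sub_le {τ w : ℝ} {X : Ω → ℝ} (hX : IsRandomRounding μ τ w X)
    (hXm : AEStronglyMeasurable X μ) (hw : 0 ≤ w) (hτ : 0 < τ) {t : ℝ} (ht : |t| * τ ≤ 1) :
    mgf (fun ω => X ω - w) μ t ≤ Real.exp (t ^ 2 * (τ * w)) := by
  have h0 := Int.sub_floor_div_mul_nonneg w hτ
  have h1 := Int.sub_floor_div_mul_lt w hτ
  have ha0 : 0 ≤ (⌊w / τ⌋ : ℝ) * τ :=
    mul_nonneg (by exact_mod_cast Int.floor_nonneg.mpr (div_nonneg hw hτ.le)) hτ.le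
  have hX1 : Integrable X μ := .of_bound hXm (|w| + τ) <| by
    filter_upwards [hX.ae_abs_sub_le hτ] with ω hω
    rw [Real.norm_eq_abs]
    linarith [abs_sub_abs_le_abs_sub (X ω) w]
  have hmean : ∫ ω, X ω - w ∂μ = 0 := by
    rw [integral_sub hX1 (integrable_const w), hX.2]
    simp
  have hvar : ∫ ω, (X ω - w) ^ 2 ∂μ ≤ τ * w := by
    rw [integral_sub_sq_of_ae_eq_or_eq hXm hX.1 hX.2]
    nlinarith
  calc mgf (fun ω => X ω - w) μ t ≤ Real.exp (t ^ 2 * ∫ ω, (X ω - w) ^ 2 ∂μ) :=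
        mgf_le_exp_sq_mul_integral_sq (hXm.sub aestronglyMeasurable_const)
          (hX.ae_abs_sub_le hτ) ht hmean
    _ ≤ Real.exp (t ^ 2 * (τ * w)) := by gcongr

lemma measureReal_sum_ge_le_exp_of_mgf_le {ι : Type*} {X : ι → Ω → ℝ}
    (hX : ∀ i, Measurable (X i)) (hind : iIndepFun X μ) (s : Finset ι) {t : ℝ} (ht : 0 ≤ t)
    {σ : ι → ℝ} (hint : ∀ i ∈ s, Integrable (fun ω => Real.exp (t * X i ω)) μ)
    (hmgf : ∀ i ∈ s, mgf (X i) μ t ≤ Real.exp (t ^ 2 * σ i)) (r : ℝ) :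
    μ.real {ω | r ≤ ∑ i ∈ s, X i ω} ≤ Real.exp (-t * r + t ^ 2 * ∑ i ∈ s, σ i) := by
  have hsum : mgf (∑ i ∈ s, X i) μ t ≤ Real.exp (t ^ 2 * ∑ i ∈ s, σ i) :=
    calc mgf (∑ i ∈ s, X i) μ t = ∏ i ∈ s, mgf (X i) μ t := hind.mgf_sum hX s
      _ ≤ ∏ i ∈ s, Real.exp (t ^ 2 * σ i) :=
          Finset.prod_le_prod (fun _ _ => mgf_nonneg) hmgf
      _ = Real.exp (t ^ 2 * ∑ i ∈ s, σ i) := by rw [← Real.exp_sum, Finset.mul_sum]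
  calc μ.real {ω | r ≤ ∑ i ∈ s, X i ω}
      = μ.real {ω | r ≤ (∑ i ∈ s, X i) ω} := by simp only [Finset.sum_apply]
    _ ≤ Real.exp (-t * r) * mgf (∑ i ∈ s, X i) μ t :=
        measure_ge_le_exp_mul_mgf r ht (hind.integrable_exp_mul_sum hX hint)
    _ ≤ Real.exp (-t * r) * Real.exp (t ^ 2 * ∑ i ∈ s, σ i) := by gcongr
    _ = Real.exp (-t * r + t ^ 2 * ∑ i ∈ s, σ i) := (Real.exp_add _ _).symm

lemma measureReal_abs_sum_sub_gt_le_of_isRandomRounding {ι : Type*} {W : ι → Ω → ℝ}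
    (hW : ∀ i, Measurable (W i)) (hind : iIndepFun W μ) {w : ι → ℝ} (hw : ∀ i, 0 ≤ w i)
    {τ : ℝ} (hτ : 0 < τ) (hround : ∀ i, IsRandomRounding μ τ (w i) (W i)) (s : Finset ι)
    {t : ℝ} (ht : 0 ≤ t) (htτ : t * τ ≤ 1) (r : ℝ) :
    μ.real {ω | r < |∑ i ∈ s, W i ω - ∑ i ∈ s, w i|} ≤
      2 * Real.exp (-t * r + t ^ 2 * (τ * ∑ i ∈ s, w i)) := by
  have tail : ∀ c : ℝ, c ^ 2 = 1 →
      μ.real {ω | r ≤ ∑ i ∈ s, c * (W i ω - w i)} ≤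
        Real.exp (-t * r + t ^ 2 * (τ * ∑ i ∈ s, w i)) := by
    intro c hc
    have hc' : |c| = 1 := by rw [← abs_one, ← sq_eq_sq_iff_abs_eq_abs, hc, one_pow]
    have hint : ∀ i ∈ s, Integrable (fun ω => Real.exp (t * (c * (W i ω - w i)))) μ :=
      fun i _ => by
        simpa only [mul_assoc] using integrable_exp_mul_of_ae_abs_le
          ((hW i).sub_const (w i)).aestronglyMeasurable ((hround i).ae_abs_sub_le hτ) (t * c)
    have hmgf : ∀ i ∈ s, mgf (fun ω => c * (W i ω - w i)) μ t ≤
        Real.exp (t ^ 2 * (τ * w i)) := fun i _ => by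
      have := (hround i).mgf_sub_le (hW i).aestronglyMeasurable (hw i) hτ (t := t * c)
        (by rw [abs_mul, hc', mul_one, abs_of_nonneg ht]; exact htτ)
      simpa only [mgf, mul_assoc, mul_pow, hc, mul_one] using this
    rw [Finset.mul_sum]
    exact measureReal_sum_ge_le_exp_of_mgf_le (fun i => ((hW i).sub_const (w i)).const_mul c)
      (hind.comp _ fun i => (measurable_id.sub_const (w i)).const_mul c) s ht hint hmgf r
  have hsplit : {ω | r < |∑ i ∈ s, W i ω - ∑ i ∈ s, w i|} ⊆
      {ω | r ≤ ∑ i ∈ s, 1 * (W i ω - w i)} ∪ {ω | r ≤ ∑ i ∈ s, -1 * (W i ω - w i)} := by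
    intro ω hω
    simp only [Set.mem_ofPred_eq, one_mul, neg_one_mul, Finset.sum_neg_distrib,
      Finset.sum_sub_distrib] at hω ⊢
    rcases lt_abs.mp hω with h | h
    · exact Or.inl h.le
    · exact Or.inr h.le
  calc _ ≤ _ := measureReal_mono hsplit
    _ ≤ _ := measureReal_union_le _ _
    _ ≤ _ := by linarith [tail 1 (by norm_num), tail (-1) (by norm_num)]

lemma measureReal_abs_sum_sub_gt_le_two_mul_inv_pow {E : Type*} {W : E → Ω → ℝ}
    (hW : ∀ e, Measurable (W e)) (hind : iIndepFun W μ) {w : E → ℝ} (hw : ∀ e, 0 ≤ w e)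
    {lam k eps τ : ℝ} (hlam : 0 < lam) (hk : 1 ≤ k) (heps : 0 < eps) (heps1 : eps ≤ 1)
    {n : ℕ} (hn : 2 ≤ n) (hτ : τ = 1 / 100 * eps ^ 2 * lam / (k * Real.log n))
    (hround : ∀ e, IsRandomRounding μ τ (w e) (W e)) (s : Finset E) (m : ℕ) :
    μ.real {ω | eps * ∑ e ∈ s, w e + eps * lam * m / (2 * k) < |∑ e ∈ s, W e ω - ∑ e ∈ s, w e|}
      ≤ 2 * (((n : ℝ) ^ 25)⁻¹) ^ m := by
  have hL : 0 < Real.log n := Real.log_pos (by exact_mod_cast hn)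
  have hk0 : 0 < k := by linarith
  have hτ0 : 0 < τ := by rw [hτ]; positivity
  calc _ ≤ 2 * Real.exp (-(eps / (2 * τ)) * (eps * ∑ e ∈ s, w e + eps * lam * m / (2 * k)) +
        (eps / (2 * τ)) ^ 2 * (τ * ∑ e ∈ s, w e)) :=
        measureReal_abs_sum_sub_gt_le_of_isRandomRounding hW hind hw hτ0 hround s (by positivity)
          (by rw [div_mul_eq_mul_div, mul_comm 2 τ, ← div_div, mul_div_cancel_right₀ _ hτ0.ne']
              linarith) _
    _ ≤ 2 * Real.exp (-(25 * m * Real.log n)) := by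
        gcongr
        exact chernoff_exponent_le hk0 hL (sum_nonneg fun e _ => hw e) hτ hτ0
    _ = 2 * (((n : ℝ) ^ 25)⁻¹) ^ m := by
        rw [show -(25 * (m : ℝ) * Real.log n) = m * -((25 : ℕ) * Real.log n) by push_cast; ring,
          Real.exp_nat_mul, Real.exp_neg, Real.exp_nat_mul, Real.exp_log (by positivity)]

lemma one_sub_one_div_le_measureReal_forall_abs_sum_sub_le {V E : Type*} [Fintype V]
    {W : E → Ω → ℝ} (hW : ∀ e, Measurable (W e)) (hind : iIndepFun W μ) {w : E → ℝ}
    (hw : ∀ e, 0 ≤ w e) {lam k eps τ : ℝ} (hlam : 0 < lam) (hk : 1 ≤ k) (heps : 0 < eps)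
    (heps1 : eps ≤ 1) (hn : 2 ≤ Fintype.card V)
    (hτ : τ = 1 / 100 * eps ^ 2 * lam / (k * Real.log (Fintype.card V)))
    (hround : ∀ e, IsRandomRounding μ τ (w e) (W e)) (F : Finset V → Finset E) (hF : F ∅ = ∅) :
    1 - 1 / (Fintype.card V : ℝ) ≤
      μ.real {ω | ∀ T : Finset V, |∑ e ∈ F T, W e ω - ∑ e ∈ F T, w e| ≤
        eps * ∑ e ∈ F T, w e + eps * lam * T.card / (2 * k)} := by
  set good := {ω | ∀ T : Finset V, |∑ e ∈ F T, W e ω - ∑ e ∈ F T, w e| ≤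
    eps * ∑ e ∈ F T, w e + eps * lam * T.card / (2 * k)}
  set bad : Finset V → Set Ω := fun T => {ω | eps * ∑ e ∈ F T, w e +
    eps * lam * T.card / (2 * k) < |∑ e ∈ F T, W e ω - ∑ e ∈ F T, w e|}
  have hbad : μ.real (⋃ T, bad T) ≤ 1 / Fintype.card V :=
    (measureReal_iUnion_le_mul_add_one_pow_sub_one (by simp [hF]) fun T _ =>
      measureReal_abs_sum_sub_gt_le_two_mul_inv_pow hW hind hw hlam hk heps heps1 hn hτ hround
        (F T) T.card).trans (two_mul_inv_pow_add_one_pow_sub_one_le hn)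
  have hcover : good ∪ ⋃ T, bad T = Set.univ := Set.eq_univ_of_forall fun ω => by
    by_cases h : ω ∈ good
    exacts [Or.inl h, Or.inr (by simpa [good, bad] using h)]
  have := measureReal_union_le (μ := μ) good (⋃ T, bad T)
  rw [hcover, probReal_univ] at this
  linarith

end Concentration

/-- Partial sparsification concentration: round each edge weight of a digraph on `n ≥ 2`
vertices independently to a multiple of `τ = c₀ ε² λ / (k log n)` (for a sufficiently small
universal constant `c₀ > 0`), preserving each weight in expectation. Then with high
probability, simultaneously for every vertex set `T`, the rounded in-cut weight `w₂(T)`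
satisfies `|w₂(T) - w₁(T)| ≤ ε w₁(T) + ελ|T|/(2k)`, where `w₁(T)` is the original in-cut
weight. -/
theorem stmt12 :
    ∃ c₀ : ℝ, 0 < c₀ ∧
      ∀ {V E' Ω : Type} [Fintype V] [DecidableEq V] [Fintype E'] [MeasurableSpace Ω]
        (μ : Measure Ω) [IsProbabilityMeasure μ]
        (tail head : E' → V) (w : E' → ℝ) (lam k eps τ : ℝ) (Wr : E' → Ω → ℝ),
        (∀ e, 0 ≤ w e) → 0 < lam → 1 ≤ k → 0 < eps → eps ≤ 1 →
        2 ≤ Fintype.card V →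
        τ = c₀ * eps ^ 2 * lam / (k * Real.log (Fintype.card V)) →
        (∀ e, Measurable (Wr e)) →
        iIndepFun Wr μ →
        (∀ e, ∀ᵐ ω ∂μ, Wr e ω = (⌊w e / τ⌋ : ℝ) * τ ∨
          Wr e ω = ((⌊w e / τ⌋ : ℝ) + 1) * τ) →
        (∀ e, (∫ ω, Wr e ω ∂μ) = w e) →
        1 - 1 / (Fintype.card V : ℝ) ≤
          (μ {ω | ∀ T : Finset V,
            |(∑ e ∈ univ.filter (fun e => tail e ∉ T ∧ head e ∈ T), Wr e ω) -
              (∑ e ∈ univ.filter (fun e => tail e ∉ T ∧ head e ∈ T), w e)| ≤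
            eps * (∑ e ∈ univ.filter (fun e => tail e ∉ T ∧ head e ∈ T), w e) +
              eps * lam * T.card / (2 * k)}).toReal := by
  refine ⟨1 / 100, by norm_num, ?_⟩
  intro V E' Ω _ _ _ _ μ _ tail head w lam k eps τ Wr hw hlam hk heps heps1 hn hτ hW hind
    hround hmean
  exact one_sub_one_div_le_measureReal_forall_abs_sum_sub_le hW hind hw hlam hk heps heps1 hn hτ
    (fun e => ⟨hround e, hmean e⟩) (fun T => univ.filter (fun e => tail e ∉ T ∧ head e ∈ T))
    (by simp)
end

section
/- In a directed graph G with edge weights, let U ⊆ V and let G' be obtained from G by contracting all vertices of V\U into a single vertex s (keeping edges inside U, redirecting edges from V\U into U to start from s, and deleting edges out of U). Then for every vertex u ∈ U and every set A with V\U ⊆ A and u ∉ A, the weight of the cut from A to its complement is the same in G and G'. Consequently, the minimum weight cut separating V\U from u is the same in G and G'. -/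
open Finset

/-- Contracting `V \ U` into a single vertex `s` preserves cuts separating `V \ U` from a
vertex `u ∈ U`. The contracted graph `G'` has vertex set `insert s U`, keeps edges inside
`U`, redirects edges from `V \ U` into `U` to start from `s` (summing their weights), and
deletes edges leaving `U`. Then for every `A` with `V \ U ⊆ A` and `u ∉ A`, the weight of
the cut from `A` to its complement in `G` equals the weight of the corresponding cut from
`insert s (A ∩ U)` in `G'`; consequently the minimum weight of a cut separating `V \ U`
from `u` is the same in `G` and `G'`. -/
theorem stmt15 {V : Type*} [Fintype V] [DecidableEq V] (w : V → V → ℝ)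
    (U : Finset V) (s : V) (hs : s ∉ U) (u : V) (hu : u ∈ U)
    (w' : V → V → ℝ)
    (hw' : ∀ a b : V, w' a b =
      if b = s then 0 else if a = s then ∑ x ∈ Uᶜ, w x b else w a b) :
    (∀ A : Finset V, (∀ x : V, x ∉ U → x ∈ A) → u ∉ A →
      (∑ a ∈ A, ∑ b ∈ Aᶜ, w a b) =
        ∑ a ∈ insert s (A ∩ U), ∑ b ∈ insert s U \ insert s (A ∩ U), w' a b) ∧
    sInf {c : ℝ | ∃ A : Finset V, (∀ x : V, x ∉ U → x ∈ A) ∧ u ∉ A ∧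
        c = ∑ a ∈ A, ∑ b ∈ Aᶜ, w a b} =
      sInf {c : ℝ | ∃ A' : Finset V, A' ⊆ insert s U ∧ s ∈ A' ∧ u ∉ A' ∧
        c = ∑ a ∈ A', ∑ b ∈ insert s U \ A', w' a b} := by
  have key : ∀ A : Finset V, (∀ x : V, x ∉ U → x ∈ A) →
      (∑ a ∈ A, ∑ b ∈ Aᶜ, w a b) =
        ∑ a ∈ insert s (A ∩ U), ∑ b ∈ insert s U \ insert s (A ∩ U), w' a b := by
    intro A hA
    have hsA : s ∈ A := hA s hs
    have hdiff : insert s U \ insert s (A ∩ U) = Aᶜ := by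
      ext b
      simp only [mem_sdiff, mem_insert, mem_inter, mem_compl]
      constructor
      · rintro ⟨hb, hb2⟩
        rcases hb with rfl | hb
        · exact absurd (Or.inl rfl) hb2
        · intro hbA; exact hb2 (Or.inr ⟨hbA, hb⟩)
      · intro hbA
        have hbU : b ∈ U := by by_contra h; exact hbA (hA b h)
        refine ⟨Or.inr hbU, ?_⟩
        rintro (rfl | ⟨h1, _⟩)
        · exact hbA hsA
        · exact hbA h1
    have hsAU : s ∉ A ∩ U := fun h => hs (mem_inter.mp h).2
    have hsplit : A = Uᶜ ∪ (A ∩ U) := by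
      ext a
      simp only [mem_union, mem_compl, mem_inter]
      constructor
      · intro ha; by_cases h : a ∈ U
        · exact Or.inr ⟨ha, h⟩
        · exact Or.inl h
      · rintro (h | ⟨h, _⟩)
        · exact hA a h
        · exact h
    have hdisj : Disjoint (Uᶜ : Finset V) (A ∩ U) := by
      rw [disjoint_left]; intro a ha ha2
      exact (mem_compl.mp ha) (mem_inter.mp ha2).2
    have hLHS : ∑ a ∈ A, ∑ b ∈ Aᶜ, w a b
        = (∑ a ∈ (Uᶜ : Finset V), ∑ b ∈ Aᶜ, w a b) + ∑ a ∈ A ∩ U, ∑ b ∈ Aᶜ, w a b := by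
      rw [← sum_union hdisj, ← hsplit]
    rw [hdiff, sum_insert hsAU, hLHS]
    congr 1
    · rw [sum_comm]
      refine sum_congr rfl fun b hb => ?_
      have hbs : b ≠ s := fun h => (mem_compl.mp hb) (h ▸ hsA)
      rw [hw', if_neg hbs, if_pos rfl]
    · refine sum_congr rfl fun a ha => sum_congr rfl fun b hb => ?_
      have has : a ≠ s := fun h => hsAU (h ▸ ha)
      have hbs : b ≠ s := fun h => (mem_compl.mp hb) (h ▸ hsA)
      rw [hw', if_neg hbs, if_neg has]
  refine ⟨fun A hA _ => key A hA, ?_⟩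
  have hset : {c : ℝ | ∃ A : Finset V, (∀ x : V, x ∉ U → x ∈ A) ∧ u ∉ A ∧
        c = ∑ a ∈ A, ∑ b ∈ Aᶜ, w a b} =
      {c : ℝ | ∃ A' : Finset V, A' ⊆ insert s U ∧ s ∈ A' ∧ u ∉ A' ∧
        c = ∑ a ∈ A', ∑ b ∈ insert s U \ A', w' a b} := by
    ext c
    simp only [Set.mem_setOf_eq]
    constructor
    · rintro ⟨A, hA, huA, rfl⟩
      refine ⟨insert s (A ∩ U), ?_, mem_insert_self _ _, ?_, key A hA⟩
      · intro x hx
        rcases mem_insert.mp hx with rfl | hx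
        · exact mem_insert_self _ _
        · exact mem_insert_of_mem (mem_inter.mp hx).2
      · intro h
        rcases mem_insert.mp h with rfl | h
        · exact hs hu
        · exact huA (mem_inter.mp h).1
    · rintro ⟨A', hsub, hsA', huA', rfl⟩
      set A : Finset V := (A' ∩ U) ∪ Uᶜ with hAdef
      have hA : ∀ x : V, x ∉ U → x ∈ A := fun x hx =>
        mem_union_right _ (mem_compl.mpr hx)
      have huA : u ∉ A := by
        intro h
        rcases mem_union.mp h with h | h
        · exact huA' (mem_inter.mp h).1
        · exact (mem_compl.mp h) hu
      have hAU : A ∩ U = A' ∩ U := by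
        ext a
        simp only [hAdef, mem_inter, mem_union, mem_compl]
        tauto
      have hins : insert s (A ∩ U) = A' := by
        rw [hAU]
        ext a
        simp only [mem_insert, mem_inter]
        constructor
        · rintro (rfl | ⟨h, _⟩)
          · exact hsA'
          · exact h
        · intro h
          rcases mem_insert.mp (hsub h) with rfl | hU
          · exact Or.inl rfl
          · exact Or.inr ⟨h, hU⟩
      exact ⟨A, hA, huA, by rw [key A hA, hins]⟩
  rw [hset]
end
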